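/- arXiv:2404.17750 — 4 statements merged into one kernel-verified Lean document; each statement's English description precedes it below -/
import Mathlib

section
/- Let 0 = b₀ < b₁ < … < bₙ < b_{n+1} = 1 and let A ∈ ℝ^{(n+1)×(n+1)} have entries A_{ij} = 1 − b_{max(i,j)−1} (i.e. A_{ij} = ∫₀¹ H(x−b_{i−1})H(x−b_{j−1})dx with a(x)=1). Then for every ξ ∈ ℝ^{n+1}: ξᵀAξ ≤ (n+1)|ξ|² and ξᵀAξ ≥ h_min · Σⱼ₌₀ⁿ (Σᵢ₌₀ʲ ξᵢ)² ≥ (h_min/4)|ξ|², where h_min = min_{1≤i≤n+1}(bᵢ − b_{i−1}). Consequently the spectral condition number of A is bounded by 4(n+1)/h_min. -/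
/-!
With `hₖ = b_{k+1} - b_k`, the entry `1 - b_{max(i,j)}` telescopes to `∑_{k ≥ max(i,j)} hₖ`, so
`ξᵀAξ = ∑ₖ hₖ Sₖ²` with `Sₖ = ∑_{i ≤ k} ξᵢ`. The weights are positive, at least `h_min`, and sum to
`1`. Cauchy–Schwarz gives `Sₖ² ≤ (n+1)|ξ|²`, hence the upper bound; `ξₖ = Sₖ - S_{k-1}` and
`(x - y)² ≤ 2x² + 2y²` give `|ξ|² ≤ 4 ∑ₖ Sₖ²`, hence the lower bound. An eigenvalue is the Rayleigh
quotient of its eigenvector, so it lies between the two bounds.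
-/

open Matrix Finset

theorem dotProduct_mulVec_eq_sum_mul_sq_partialSum {ι R : Type*} [Fintype ι] [LinearOrder ι]
    [CommSemiring R] (h : ι → R) (A : Matrix ι ι R)
    (hA : ∀ i j, A i j = ∑ k with max i j ≤ k, h k) (ξ : ι → R) :
    ξ ⬝ᵥ A *ᵥ ξ = ∑ k, h k * (∑ i with i ≤ k, ξ i) ^ 2 := by
  have expand : ∀ k, h k * (∑ i with i ≤ k, ξ i) ^ 2 =
      ∑ i, ∑ j, ξ i * (ξ j * if max i j ≤ k then h k else 0) := by
    intro k
    rw [sq, sum_filter, sum_mul_sum, mul_sum]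
    refine sum_congr rfl fun i _ => ?_
    rw [mul_sum]
    refine sum_congr rfl fun j _ => ?_
    by_cases hi : i ≤ k <;> by_cases hj : j ≤ k <;> simp [hi, hj]; ring
  rw [sum_congr rfl fun k _ => expand k, sum_comm]
  refine sum_congr rfl fun i _ => ?_
  rw [sum_comm]
  simp only [mulVec, dotProduct, hA, sum_filter, mul_sum, sum_mul]
  refine sum_congr rfl fun j _ => sum_congr rfl fun k _ => ?_
  rw [max_comm]; ring

theorem sq_sum_le_card_mul_sum_sq_univ {ι : Type*} [Fintype ι] (s : Finset ι) (ξ : ι → ℝ) :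
    (∑ i ∈ s, ξ i) ^ 2 ≤ Fintype.card ι * ∑ i, ξ i ^ 2 :=
  sq_sum_le_card_mul_sum_sq.trans <|
    mul_le_mul (by exact_mod_cast card_le_univ s)
      (sum_le_sum_of_subset_of_nonneg (subset_univ s) fun _ _ _ => sq_nonneg _)
      (sum_nonneg fun _ _ => sq_nonneg _) (Nat.cast_nonneg _)

section WeightedPartialSums

variable {ι : Type*} [Fintype ι] [LinearOrder ι] (h ξ : ι → ℝ)

theorem sum_mul_sq_partialSum_le (h_nonneg : ∀ k, 0 ≤ h k) :
    ∑ k, h k * (∑ i with i ≤ k, ξ i) ^ 2 ≤ (∑ k, h k) * (Fintype.card ι * ∑ i, ξ i ^ 2) := by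
  rw [sum_mul]
  gcongr with k
  · exact h_nonneg k
  · exact sq_sum_le_card_mul_sum_sq_univ _ ξ

theorem mul_sum_sq_partialSum_le {c : ℝ} (hc : ∀ k, c ≤ h k) :
    c * ∑ k, (∑ i with i ≤ k, ξ i) ^ 2 ≤ ∑ k, h k * (∑ i with i ≤ k, ξ i) ^ 2 := by
  rw [mul_sum]
  gcongr with k
  exact hc k

end WeightedPartialSums

theorem sum_range_sq_sub_le_four_mul (S : ℕ → ℝ) (hS : S 0 = 0) (m : ℕ) :
    ∑ k ∈ range m, (S (k + 1) - S k) ^ 2 ≤ 4 * ∑ k ∈ range m, S (k + 1) ^ 2 := by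
  have shift : ∑ k ∈ range m, S k ^ 2 ≤ ∑ k ∈ range m, S (k + 1) ^ 2 :=
    calc ∑ k ∈ range m, S k ^ 2 ≤ ∑ k ∈ range (m + 1), S k ^ 2 :=
          sum_le_sum_of_subset_of_nonneg (range_subset_range.2 m.le_succ) fun _ _ _ => sq_nonneg _
      _ = ∑ k ∈ range m, S (k + 1) ^ 2 := by simp [sum_range_succ', hS]
  calc ∑ k ∈ range m, (S (k + 1) - S k) ^ 2
      ≤ ∑ k ∈ range m, (2 * S (k + 1) ^ 2 + 2 * S k ^ 2) :=
        sum_le_sum fun k _ => by nlinarith [sq_nonneg (S (k + 1) + S k)]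
    _ ≤ 4 * ∑ k ∈ range m, S (k + 1) ^ 2 := by
        rw [sum_add_distrib, ← mul_sum, ← mul_sum]
        linarith

theorem sum_sq_le_four_mul_sum_sq_partialSum {m : ℕ} (ξ : Fin m → ℝ) :
    ∑ i, ξ i ^ 2 ≤ 4 * ∑ j, (∑ i with i ≤ j, ξ i) ^ 2 := by
  set S : ℕ → ℝ := fun k => ∑ i with i.val < k, ξ i
  have S_succ : ∀ j : Fin m, S (j + 1) = ∑ i with i ≤ j, ξ i := fun j => by
    simp only [S, Nat.lt_succ_iff, Fin.le_def]
  have S_sub : ∀ j : Fin m, S (j + 1) - S j = ξ j := fun j => by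
    simp only [S, sum_filter, ← sum_sub_distrib]
    rw [sum_eq_single j]
    · simp
    · intro i _ hij
      have : (i : ℕ) < j + 1 ↔ (i : ℕ) < j := by have := Fin.val_ne_of_ne hij; omega
      simp [this]
    · simp
  have := sum_range_sq_sub_le_four_mul S (by simp [S]) m
  rw [← Fin.sum_univ_eq_sum_range (fun k => (S (k + 1) - S k) ^ 2),
    ← Fin.sum_univ_eq_sum_range (fun k => S (k + 1) ^ 2)] at this
  simp only [S_sub] at this
  simpa only [S_succ] using this

theorem sum_filter_le_sub_eq_sub {G : Type*} [AddCommGroup G] {N : ℕ} (f : ℕ → G) (m : Fin N) :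
    ∑ k with m ≤ k, (f (k + 1) - f k) = f N - f m := by
  simp only [sum_filter, Fin.le_def]
  rw [Fin.sum_univ_eq_sum_range (fun k => if (m : ℕ) ≤ k then f (k + 1) - f k else 0), ← sum_filter]
  have : {k ∈ range N | (m : ℕ) ≤ k} = Ico (m : ℕ) N := by ext; simp; omega
  rw [this, sum_Ico_sub f m.isLt.le]

theorem mem_Icc_of_hasEigenvalue_toLin' {ι : Type*} [Fintype ι] [DecidableEq ι]
    {A : Matrix ι ι ℝ} {c₁ c₂ μ : ℝ}
    (hlow : ∀ ξ : ι → ℝ, c₁ * ∑ i, ξ i ^ 2 ≤ ξ ⬝ᵥ A *ᵥ ξ)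
    (hup : ∀ ξ : ι → ℝ, ξ ⬝ᵥ A *ᵥ ξ ≤ c₂ * ∑ i, ξ i ^ 2)
    (hμ : Module.End.HasEigenvalue (toLin' A) μ) : μ ∈ Set.Icc c₁ c₂ := by
  obtain ⟨v, hv⟩ := hμ.exists_hasEigenvector
  have hAv : A *ᵥ v = μ • v := by simpa [toLin'_apply] using hv.apply_eq_smul
  have rayleigh : v ⬝ᵥ A *ᵥ v = μ * ∑ i, v i ^ 2 := by
    rw [hAv, dotProduct_smul, smul_eq_mul]
    simp only [dotProduct, sq]
  have norm_pos : 0 < ∑ i, v i ^ 2 := by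
    obtain ⟨i, hi⟩ := Function.ne_iff.1 hv.2
    have hi : v i ≠ 0 := hi
    exact sum_pos' (fun j _ => sq_nonneg _) ⟨i, mem_univ i, by positivity⟩
  exact ⟨le_of_mul_le_mul_right (rayleigh ▸ hlow v) norm_pos,
    le_of_mul_le_mul_right (rayleigh ▸ hup v) norm_pos⟩

/-- Two-sided quadratic form bounds and the condition number estimate
`O(n · h_min⁻¹)` for the shallow ReLU stiffness matrix with `a ≡ 1`. -/
theorem stmt3 (n : ℕ) (b : ℕ → ℝ)
    (hb0 : b 0 = 0) (hbn : b (n + 1) = 1)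
    (hmono : ∀ i ≤ n, b i < b (i + 1))
    (A : Matrix (Fin (n + 1)) (Fin (n + 1)) ℝ)
    (hA : ∀ i j : Fin (n + 1), A i j = 1 - b (max i.val j.val))
    (hmin : ℝ)
    (hhmin : hmin = ⨅ i : Fin (n + 1), (b (i.val + 1) - b i.val)) :
    (∀ ξ : Fin (n + 1) → ℝ,
        ξ ⬝ᵥ A.mulVec ξ ≤ (n + 1) * ∑ i, (ξ i) ^ 2 ∧
        hmin * ∑ j : Fin (n + 1),
            (∑ i ∈ Finset.univ.filter (fun i : Fin (n + 1) => i ≤ j), ξ i) ^ 2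
          ≤ ξ ⬝ᵥ A.mulVec ξ ∧
        hmin / 4 * ∑ i, (ξ i) ^ 2 ≤
          hmin * ∑ j : Fin (n + 1),
            (∑ i ∈ Finset.univ.filter (fun i : Fin (n + 1) => i ≤ j), ξ i) ^ 2 ∧
        hmin / 4 * ∑ i, (ξ i) ^ 2 ≤ ξ ⬝ᵥ A.mulVec ξ) ∧
    (∀ lam : ℝ, Module.End.HasEigenvalue (Matrix.toLin' A) lam →
        hmin / 4 ≤ lam ∧ lam ≤ n + 1) ∧
    (∀ lam mu : ℝ, Module.End.HasEigenvalue (Matrix.toLin' A) lam →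
        Module.End.HasEigenvalue (Matrix.toLin' A) mu →
        lam / mu ≤ 4 * (n + 1) / hmin) := by
  set h : Fin (n + 1) → ℝ := fun k => b (k + 1) - b k
  have h_pos : ∀ k, 0 < h k := fun k => sub_pos.2 (hmono k k.is_le)
  have h_sum : ∑ k, h k = 1 := by
    rw [Fin.sum_univ_eq_sum_range (fun k => b (k + 1) - b k), sum_range_sub, hbn, hb0, sub_zero]
  have hmin_le : ∀ k, hmin ≤ h k := fun k => hhmin ▸ Finite.ciInf_le h k
  have hmin_pos : 0 < hmin := by
    obtain ⟨k, hk⟩ := exists_eq_ciInf_of_finite (f := h)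
    exact hhmin ▸ hk ▸ h_pos k
  have form : ∀ ξ, ξ ⬝ᵥ A *ᵥ ξ = ∑ k, h k * (∑ i with i ≤ k, ξ i) ^ 2 :=
    dotProduct_mulVec_eq_sum_mul_sq_partialSum h A fun i j => by
      rw [hA, sum_filter_le_sub_eq_sub, hbn]; rfl
  have upper : ∀ ξ, ξ ⬝ᵥ A *ᵥ ξ ≤ (n + 1) * ∑ i, ξ i ^ 2 := fun ξ => by
    simpa [form, h_sum] using sum_mul_sq_partialSum_le h ξ fun k => (h_pos k).le
  have lower : ∀ ξ, hmin * ∑ j, (∑ i with i ≤ j, ξ i) ^ 2 ≤ ξ ⬝ᵥ A *ᵥ ξ := fun ξ =>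
    form ξ ▸ mul_sum_sq_partialSum_le h ξ hmin_le
  have lower' : ∀ ξ : Fin (n + 1) → ℝ,
      hmin / 4 * ∑ i, ξ i ^ 2 ≤ hmin * ∑ j, (∑ i with i ≤ j, ξ i) ^ 2 := fun ξ => by
    nlinarith [sum_sq_le_four_mul_sum_sq_partialSum ξ]
  have eig : ∀ lam, Module.End.HasEigenvalue (toLin' A) lam → hmin / 4 ≤ lam ∧ lam ≤ n + 1 :=
    fun lam => mem_Icc_of_hasEigenvalue_toLin' (fun ξ => (lower' ξ).trans (lower ξ)) upper
  refine ⟨fun ξ => ⟨upper ξ, lower ξ, lower' ξ, (lower' ξ).trans (lower ξ)⟩, eig,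
    fun lam mu hlam hmu => ?_⟩
  calc lam / mu ≤ (n + 1) / (hmin / 4) :=
        div_le_div₀ (by positivity) (eig lam hlam).2 (by positivity) (eig mu hmu).1
    _ = 4 * (n + 1) / hmin := by field_simp
end

section
/- With breakpoints 0 = b₀ < b₁ < … < bₙ < b_{n+1} = 1 and a(x) ≥ μ > 0 integrable, set sᵢ = ∫_{b_{i−1}}^{bᵢ} a(x)dx for i = 1,…,n+1 and let A be the (n+1)×(n+1) matrix with A_{ij} = ∫_{b_{max(i,j)−1}}^{1} a(x)dx. Then A is invertible and A⁻¹ is the symmetric tridiagonal matrix with diagonal entries (1/s₁, 1/s₁+1/s₂, …, 1/sₙ+1/s_{n+1}) and off-diagonal entries (A⁻¹)_{i,i+1} = −1/sᵢ. -/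
/-!
Write `F k = ∫_{b_k}^1 a`, so that `A i j = F (max i j)`, `F k - F (k + 1) = s (k + 1)` and
`F (n + 1) = 0`. Column `j` of `T` is `(e_j - e_{j+1}) / s_{j+1} + (e_j - e_{j-1}) / s_j`, so
`(A T) i j` is a sum of two difference quotients of `k ↦ F (max i k)`; these equal `[i ≤ j]` and
`-[i < j]`, which add up to `[i = j]`.
-/

open Finset

section MaxMatrix

variable {K : Type*} [Field K] {n : ℕ}

def maxMatrix (F : ℕ → K) : Matrix (Fin (n + 1)) (Fin (n + 1)) K :=
  Matrix.of fun i j => F (max i.val j.val)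

def tridiagOfIncrements (s : ℕ → K) : Matrix (Fin (n + 1)) (Fin (n + 1)) K :=
  Matrix.of fun i j =>
    if i = j then (if i.val = 0 then 0 else (s i.val)⁻¹) + (s (i.val + 1))⁻¹
    else if i.val + 1 = j.val ∨ j.val + 1 = i.val then -(s (max i.val j.val))⁻¹
    else 0

lemma sum_fin_mul_ite_val_eq {f : ℕ → K} (hf : f (n + 1) = 0) {m : ℕ} (hm : m ≤ n + 1) :
    ∑ k : Fin (n + 1), f k * (if k.val = m then 1 else 0) = f m := by
  rw [Fin.sum_univ_eq_sum_range (fun k => f k * if k = m then 1 else 0)]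
  simp only [mul_ite, mul_one, mul_zero, sum_ite_eq', mem_range]
  split_ifs with h
  · rfl
  · rw [show m = n + 1 by omega, hf]

lemma sum_fin_mul_sub_ite_val_eq {f : ℕ → K} (hf : f (n + 1) = 0) {p q : ℕ}
    (hp : p ≤ n + 1) (hq : q ≤ n + 1) (c : K) :
    ∑ k : Fin (n + 1), f k * (((if k.val = p then 1 else 0) - (if k.val = q then 1 else 0)) * c) =
      (f p - f q) * c := by
  simp only [mul_sub, sub_mul, ← mul_assoc, sum_sub_distrib, ← sum_mul,
    sum_fin_mul_ite_val_eq hf hp, sum_fin_mul_ite_val_eq hf hq]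

lemma tridiagOfIncrements_apply_eq_differences (s : ℕ → K) (k j : Fin (n + 1)) :
    tridiagOfIncrements s k j =
      ((if k.val = j.val then 1 else 0) - (if k.val = j.val + 1 then 1 else 0)) * (s (j + 1))⁻¹ +
      ((if k.val = j.val then 1 else 0) - (if k.val = j.val - 1 then 1 else 0)) *
        (if j.val = 0 then 0 else (s j)⁻¹) := by
  obtain ⟨k, hk⟩ := k
  obtain ⟨j, hj⟩ := j
  simp only [tridiagOfIncrements, Matrix.of_apply, Fin.mk.injEq]
  split_ifs <;> (try omega) <;> subst_vars <;> simp [add_comm]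

variable {F s : ℕ → K}

lemma sub_max_succ_eq_ite (hF : ∀ k ≤ n, F k = s (k + 1) + F (k + 1)) (i : ℕ) {k : ℕ}
    (hk : k ≤ n) :
    F (max i k) - F (max i (k + 1)) = if i ≤ k then s (k + 1) else 0 := by
  split_ifs with hik
  · rw [max_eq_right hik, max_eq_right (by omega), hF k hk, add_sub_cancel_right]
  · rw [max_eq_left (by omega), max_eq_left (by omega), sub_self]

theorem maxMatrix_mul_tridiagOfIncrements (hs : ∀ k ≤ n, s (k + 1) ≠ 0)
    (hF : ∀ k ≤ n, F k = s (k + 1) + F (k + 1)) (hFn : F (n + 1) = 0) :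
    maxMatrix F * tridiagOfIncrements s = (1 : Matrix (Fin (n + 1)) (Fin (n + 1)) K) := by
  ext ⟨i, hi⟩ ⟨j, hj⟩
  have hFi : F (max i (n + 1)) = 0 := by rwa [max_eq_right hi.le]
  simp only [Matrix.mul_apply, maxMatrix, Matrix.of_apply,
    tridiagOfIncrements_apply_eq_differences, mul_add, sum_add_distrib]
  rw [sum_fin_mul_sub_ite_val_eq (f := fun k => F (max i k)) hFi (by omega) (by omega),
    sum_fin_mul_sub_ite_val_eq (f := fun k => F (max i k)) hFi (by omega) (by omega),
    sub_max_succ_eq_ite hF i (by omega), Matrix.one_apply]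
  simp only [Fin.mk.injEq]
  obtain _ | m := j
  · split_ifs <;> simp_all
  · rw [← neg_sub, Nat.add_sub_cancel, sub_max_succ_eq_ite hF i (k := m) (by omega),
      if_neg m.succ_ne_zero]
    have := hs m (by omega)
    have := hs (m + 1) (by omega)
    split_ifs <;> first | omega | (field_simp; ring)

end MaxMatrix

/-- The inverse of the shallow-Ritz stiffness matrix is the explicit symmetric
tridiagonal matrix built from `sᵢ = ∫_{b_{i−1}}^{bᵢ} a`. -/
theorem stmt4 (n : ℕ) (b : ℕ → ℝ) (a : ℝ → ℝ) (μ : ℝ) (hμ : 0 < μ)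
    (ha : ∀ x ∈ Set.Icc (0 : ℝ) 1, μ ≤ a x)
    (haint : IntervalIntegrable a MeasureTheory.volume 0 1)
    (hb0 : b 0 = 0) (hbn : b (n + 1) = 1) (hmono : ∀ i ≤ n, b i < b (i + 1))
    (s : ℕ → ℝ) (hs : ∀ i : ℕ, s i = ∫ x in b (i - 1)..b i, a x)
    (A T : Matrix (Fin (n + 1)) (Fin (n + 1)) ℝ)
    (hA : ∀ i j : Fin (n + 1), A i j = ∫ x in b (max i.val j.val)..1, a x)
    (hT : ∀ i j : Fin (n + 1), T i j =
      if i = j then (if i.val = 0 then 0 else (s i.val)⁻¹) + (s (i.val + 1))⁻¹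
      else if i.val + 1 = j.val ∨ j.val + 1 = i.val then -(s (max i.val j.val))⁻¹
      else 0) :
    A * T = 1 ∧ T * A = 1 ∧ IsUnit A ∧ A⁻¹ = T := by
  have hb : ∀ i ≤ n + 1, b i ∈ Set.Icc (0 : ℝ) 1 := by
    have hb_mono := (strictMonoOn_Iic_of_lt_succ (ψ := b) (n := n + 1)
      fun m hm => hmono m (by omega)).monotoneOn
    intro i hi
    rw [← hb0, ← hbn]
    exact ⟨hb_mono (by simp) hi (Nat.zero_le i), hb_mono hi (by simp) hi⟩
  have hint : ∀ i ≤ n + 1, ∀ j ≤ n + 1,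
      IntervalIntegrable a MeasureTheory.volume (b i) (b j) := by
    intro i hi j hj
    refine haint.mono_set (Set.uIcc_subset_uIcc ?_ ?_) <;>
      rw [Set.uIcc_of_le zero_le_one] <;> apply hb <;> assumption
  have hs_succ : ∀ k, s (k + 1) = ∫ x in b k..b (k + 1), a x := fun k => hs (k + 1)
  have hs_pos : ∀ k ≤ n, 0 < s (k + 1) := by
    intro k hk
    rw [hs_succ]
    refine intervalIntegral.intervalIntegral_pos_of_pos_on
      (hint k (by omega) (k + 1) (by omega)) (fun x hx => hμ.trans_le (ha x ?_)) (hmono k hk)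
    exact ⟨(hb k (by omega)).1.trans hx.1.le, hx.2.le.trans (hb (k + 1) (by omega)).2⟩
  set F : ℕ → ℝ := fun k => ∫ x in b k..1, a x
  have hF : ∀ k ≤ n, F k = s (k + 1) + F (k + 1) := by
    intro k hk
    simp only [F, hs_succ]
    rw [← hbn]
    exact (intervalIntegral.integral_add_adjacent_intervals
      (hint k (by omega) (k + 1) (by omega)) (hint (k + 1) (by omega) (n + 1) le_rfl)).symm
  have hAT : A * T = 1 := by
    obtain rfl : A = maxMatrix F := Matrix.ext hA
    obtain rfl : T = tridiagOfIncrements s := Matrix.ext hT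
    exact maxMatrix_mul_tridiagOfIncrements (fun k hk => (hs_pos k hk).ne') hF (by simp [F, hbn])
  have hTA : T * A = 1 := mul_eq_one_comm.mp hAT
  exact ⟨hAT, hTA, ⟨⟨A, T, hAT, hTA⟩, rfl⟩, Matrix.inv_eq_right_inv hAT⟩
end

section
/- Let uₙ(x) = α + Σᵢ₌₀ⁿ cᵢσ(x−bᵢ) with ReLU σ and 0 = b₀ < b₁ < … < bₙ < 1. Then for each j ∈ {1,…,n}, the restriction of (uₙ′)² to (bⱼ, b_{j+1}) equals the constant (Σᵢ₌₀ʲ cᵢ)², and consequently ∂/∂bⱼ ∫₀¹ a(x)(uₙ′(x))² dx = −2cⱼ a(bⱼ)(Σᵢ₌₀^{j−1} cᵢ + cⱼ/2), assuming a is continuous at bⱼ. -/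
/-!
Moving the kink `b_j` to `t` changes the slope to `S_t(x) = R(x) + c_j H(x - t)`, where `R`
collects the other kinks. Since `H² = H`, `S_t² = R² + H(x - t) Q` with `Q = c_j (2R + c_j)`, so
the energy is a constant plus `∫_t^1 a Q`. The other kinks lie away from `b_j`, so `a Q` is
continuous at `b_j` and the fundamental theorem of calculus gives the derivative `-a(b_j) Q(b_j)`;
the kinks to the left of `b_j` are exactly those of index `< j`, so `R(b_j) = Σ_{i<j} c_i`.
-/

open Set Finset Function MeasureTheory Filter Topology

noncomputable def heaviside (t : ℝ) : ℝ := if 0 < t then 1 else 0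

lemma heaviside_of_pos {t : ℝ} (ht : 0 < t) : heaviside t = 1 := if_pos ht

lemma heaviside_of_nonpos {t : ℝ} (ht : t ≤ 0) : heaviside t = 0 := if_neg ht.not_gt

lemma heaviside_mul_self (t : ℝ) : heaviside t * heaviside t = heaviside t := by
  unfold heaviside; split_ifs <;> norm_num

lemma abs_heaviside_le_one (t : ℝ) : |heaviside t| ≤ 1 := by
  unfold heaviside; split_ifs <;> norm_num

lemma measurable_heaviside : Measurable heaviside :=
  Measurable.ite measurableSet_Ioi measurable_const measurable_const

lemma continuousAt_heaviside {t : ℝ} (ht : t ≠ 0) : ContinuousAt heaviside t := by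
  rcases ht.lt_or_gt with ht | ht
  · exact continuousAt_const.congr <| (eventually_lt_nhds ht).mono fun x hx =>
      (heaviside_of_nonpos hx.le).symm
  · exact continuousAt_const.congr <| (eventually_gt_nhds ht).mono fun x hx =>
      (heaviside_of_pos hx).symm

lemma continuousAt_heaviside_sub {t x : ℝ} (hx : x ≠ t) :
    ContinuousAt (fun y => heaviside (y - t)) x :=
  (continuousAt_heaviside (sub_ne_zero.2 hx)).comp_of_eq
    (continuousAt_id.sub continuousAt_const) rfl

lemma sq_add_mul_heaviside (r c u : ℝ) :
    (r + c * heaviside u) ^ 2 = r ^ 2 + heaviside u * (c * (2 * r + c)) := by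
  linear_combination c ^ 2 * heaviside_mul_self u

lemma memLp_top_heaviside_sub (μ : Measure ℝ) (t : ℝ) :
    MemLp (fun x => heaviside (x - t)) ⊤ μ :=
  memLp_top_of_bound
    (measurable_heaviside.comp (measurable_id.sub_const t)).aestronglyMeasurable 1
    (ae_of_all _ fun _ => abs_heaviside_le_one _)

lemma memLp_top_sum_mul_heaviside {ι : Type*} (μ : Measure ℝ) (s : Finset ι) (c b : ι → ℝ) :
    MemLp (fun x => ∑ i ∈ s, c i * heaviside (x - b i)) ⊤ μ :=
  memLp_finsetSum s fun i _ => (memLp_top_heaviside_sub μ (b i)).const_mul (c i)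

lemma sum_mul_heaviside_update {ι : Type*} [DecidableEq ι] {s : Finset ι} {j : ι} (hj : j ∈ s)
    (c b : ι → ℝ) (t x : ℝ) :
    ∑ i ∈ s, c i * heaviside (x - update b j t i) =
      ∑ i ∈ s.erase j, c i * heaviside (x - b i) + c j * heaviside (x - t) := by
  rw [← sum_erase_add _ _ hj, update_self]
  congr 1
  exact sum_congr rfl fun i hi => by rw [update_of_ne (ne_of_mem_erase hi)]

lemma sum_mul_heaviside_eq_of_mem_Ioc {N j : ℕ} {c b : ℕ → ℝ} {x : ℝ}
    (hb : MonotoneOn b (Set.Iic N)) (hjN : j < N) (hx : x ∈ Ioc (b j) (b (j + 1))) :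
    ∑ i ∈ range N, c i * heaviside (x - b i) = ∑ i ∈ range (j + 1), c i := by
  have hon : ∀ i ∈ range (j + 1), c i * heaviside (x - b i) = c i := fun i hi => by
    have : b i ≤ b j := hb (by grind) (Set.mem_Iic.2 hjN.le) (by grind)
    rw [heaviside_of_pos (by linarith [hx.1]), mul_one]
  have hoff : ∀ i ∈ Finset.Ico (j + 1) N, c i * heaviside (x - b i) = 0 := fun i hi => by
    have : b (j + 1) ≤ b i := hb (Set.mem_Iic.2 hjN) (by grind) (by grind)
    rw [heaviside_of_nonpos (by linarith [hx.2]), mul_zero]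
  rw [← sum_range_add_sum_Ico _ hjN, sum_congr rfl hon, sum_eq_zero hoff, add_zero]

lemma IntervalIntegrable.mul_memLp_top {f g : ℝ → ℝ} {p q : ℝ} {μ : Measure ℝ}
    (hf : IntervalIntegrable f μ p q) (hg : MemLp g ⊤ μ) :
    IntervalIntegrable (fun x => f x * g x) μ p q :=
  intervalIntegrable_iff.2 (hf.def'.mul_of_top_left (hg.restrict _))

lemma integral_mul_heaviside_sub {g : ℝ → ℝ} {p q t : ℝ}
    (hg : IntervalIntegrable g volume p q) (ht : t ∈ Icc p q) :
    ∫ x in p..q, g x * heaviside (x - t) = ∫ x in t..q, g x := by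
  have hgH : IntervalIntegrable (fun x => g x * heaviside (x - t)) volume p q :=
    hg.mul_memLp_top (memLp_top_heaviside_sub volume t)
  have hsub : ∀ u ∈ Icc p q, ∀ v ∈ Icc p q, uIcc u v ⊆ uIcc p q := fun u hu v hv =>
    uIcc_subset_uIcc (Icc_subset_uIcc hu) (Icc_subset_uIcc hv)
  have hpq : p ≤ q := ht.1.trans ht.2
  rw [← intervalIntegral.integral_add_adjacent_intervals
    (hgH.mono_set (hsub p (left_mem_Icc.2 hpq) t ht))
    (hgH.mono_set (hsub t ht q (right_mem_Icc.2 hpq)))]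
  have hleft : ∫ x in p..t, g x * heaviside (x - t) = 0 := by
    rw [← intervalIntegral.integral_zero]
    refine intervalIntegral.integral_congr fun x hx => ?_
    rw [uIcc_of_le ht.1] at hx
    simp [heaviside_of_nonpos (sub_nonpos.2 hx.2)]
  have hright : ∫ x in t..q, g x * heaviside (x - t) = ∫ x in t..q, g x := by
    refine intervalIntegral.integral_congr_ae (ae_of_all _ fun x hx => ?_)
    rw [uIoc_of_le ht.2] at hx
    rw [heaviside_of_pos (sub_pos.2 hx.1), mul_one]
  rw [hleft, hright, zero_add]

theorem hasDerivAt_integral_mul_heaviside {g : ℝ → ℝ} {p q t₀ : ℝ}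
    (hg : IntervalIntegrable g volume p q) (ht₀ : t₀ ∈ Ioo p q) (hgc : ContinuousAt g t₀) :
    HasDerivAt (fun t => ∫ x in p..q, g x * heaviside (x - t)) (-g t₀) t₀ := by
  have hmeas : StronglyMeasurableAtFilter g (𝓝 t₀) :=
    AEStronglyMeasurable.stronglyMeasurableAtFilter_of_mem hg.def'.aestronglyMeasurable <| by
      rw [uIoc_of_le (ht₀.1.trans ht₀.2).le]
      exact mem_of_superset (Ioo_mem_nhds ht₀.1 ht₀.2) Ioo_subset_Ioc_self
  have hg' : IntervalIntegrable g volume t₀ q :=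
    hg.mono_set (uIcc_subset_uIcc (Icc_subset_uIcc (Ioo_subset_Icc_self ht₀)) right_mem_uIcc)
  refine (intervalIntegral.integral_hasDerivAt_left hg' hmeas hgc).congr_of_eventuallyEq ?_
  filter_upwards [Icc_mem_nhds ht₀.1 ht₀.2] with t ht using integral_mul_heaviside_sub hg ht

theorem hasDerivAt_integral_mul_sq_sum_heaviside_update {ι : Type*} [DecidableEq ι]
    {a : ℝ → ℝ} {p q : ℝ} (ha : IntervalIntegrable a volume p q) {s : Finset ι}
    {c b : ι → ℝ} {j : ι} (hj : j ∈ s) (hbj : b j ∈ Ioo p q) (hb : ∀ i ∈ s, i ≠ j → b i ≠ b j)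
    (hac : ContinuousAt a (b j)) :
    HasDerivAt
      (fun t => ∫ x in p..q, a x * (∑ i ∈ s, c i * heaviside (x - update b j t i)) ^ 2)
      (-(a (b j) * (c j * (2 * ∑ i ∈ s.erase j, c i * heaviside (b j - b i) + c j)))) (b j) := by
  set R : ℝ → ℝ := fun x => ∑ i ∈ s.erase j, c i * heaviside (x - b i)
  set Q : ℝ → ℝ := fun x => c j * (2 * R x + c j)
  have hR : MemLp R ⊤ volume := memLp_top_sum_mul_heaviside _ _ _ _
  have hR2 : MemLp (fun x => R x ^ 2) ⊤ volume := by
    simpa only [sq, Pi.mul_def] using hR.mul hR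
  have hQ : MemLp Q ⊤ volume := ((hR.const_mul 2).add (memLp_top_const _)).const_mul _
  have hRc : ContinuousAt R (b j) := tendsto_finsetSum _ fun i hi =>
    continuousAt_const.mul <|
      continuousAt_heaviside_sub (hb i (mem_of_mem_erase hi) (ne_of_mem_erase hi)).symm
  have hsplit : ∀ t, ∫ x in p..q, a x * (∑ i ∈ s, c i * heaviside (x - update b j t i)) ^ 2 =
      (∫ x in p..q, a x * R x ^ 2) + ∫ x in p..q, a x * Q x * heaviside (x - t) := fun t => by
    rw [← intervalIntegral.integral_add (ha.mul_memLp_top hR2)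
      ((ha.mul_memLp_top hQ).mul_memLp_top (memLp_top_heaviside_sub volume t))]
    refine intervalIntegral.integral_congr fun x _ => ?_
    rw [sum_mul_heaviside_update hj, sq_add_mul_heaviside]
    ring
  have hQc : ContinuousAt Q (b j) :=
    continuousAt_const.mul ((continuousAt_const.mul hRc).add continuousAt_const)
  simp_rw [hsplit]
  exact (hasDerivAt_integral_mul_heaviside (ha.mul_memLp_top hQ) hbj (hac.mul hQc)).const_add _

theorem stmt6_general (n : ℕ) (c b : ℕ → ℝ) (a : ℝ → ℝ)
    (haint : IntervalIntegrable a MeasureTheory.volume 0 1)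
    (hb0 : b 0 = 0) (hbn : b (n + 1) = 1) (hmono : ∀ i ≤ n, b i < b (i + 1))
    (H : ℝ → ℝ) (hH : ∀ t, H t = if 0 < t then 1 else 0)
    (j : ℕ) (hj1 : 1 ≤ j) (hjn : j ≤ n) (hacont : ContinuousAt a (b j)) :
    (∀ x ∈ Set.Ioo (b j) (b (j + 1)),
        (∑ i ∈ Finset.range (n + 1), c i * H (x - b i)) ^ 2 =
          (∑ i ∈ Finset.range (j + 1), c i) ^ 2) ∧
    HasDerivAt
      (fun t => ∫ x in (0 : ℝ)..1,
          a x * (∑ i ∈ Finset.range (n + 1), c i * H (x - Function.update b j t i)) ^ 2)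
      (-2 * c j * a (b j) * (∑ i ∈ Finset.range j, c i + c j / 2)) (b j) := by
  obtain rfl : H = heaviside := funext hH
  have hb : StrictMonoOn b (Set.Iic (n + 1)) :=
    strictMonoOn_Iic_of_lt_succ fun m hm => hmono m (Nat.lt_succ_iff.1 hm)
  refine ⟨fun x hx => by
    rw [sum_mul_heaviside_eq_of_mem_Ioc hb.monotoneOn (by omega) (Ioo_subset_Ioc_self hx)], ?_⟩
  obtain ⟨k, rfl⟩ : ∃ k, j = k + 1 := ⟨j - 1, by omega⟩
  have hbj : b (k + 1) ∈ Set.Ioo 0 1 := by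
    refine ⟨hb0 ▸ hb ?_ ?_ (by omega), hbn ▸ hb ?_ ?_ (by omega)⟩ <;>
      simp only [Set.mem_Iic] <;> omega
  have hleft : ∑ i ∈ (range (n + 1)).erase (k + 1), c i * heaviside (b (k + 1) - b i) =
      ∑ i ∈ range (k + 1), c i := by
    rw [sum_erase _ (by rw [sub_self, heaviside_of_nonpos le_rfl, mul_zero]),
      sum_mul_heaviside_eq_of_mem_Ioc hb.monotoneOn (by omega)
        ⟨hb (Set.mem_Iic.2 (by omega)) (Set.mem_Iic.2 (by omega)) (by omega), le_rfl⟩]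
  have hne : ∀ i ∈ range (n + 1), i ≠ k + 1 → b i ≠ b (k + 1) := fun i hi hik =>
    hb.injOn.ne (Set.mem_Iic.2 (mem_range.1 hi).le) (Set.mem_Iic.2 (by omega)) hik
  convert hasDerivAt_integral_mul_sq_sum_heaviside_update haint (mem_range.2 (by omega)) hbj hne
    hacont using 1
  rw [hleft]
  ring

/-- `(uₙ′)²` is constant on each subinterval `(bⱼ, b_{j+1})`, and the derivative of the
energy `∫ a (uₙ′)²` with respect to the breakpoint `bⱼ` equals
`−2 cⱼ a(bⱼ)(Σ_{i<j} cᵢ + cⱼ/2)`. -/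
theorem stmt6 (n : ℕ) (c b : ℕ → ℝ) (α : ℝ) (a : ℝ → ℝ) (μ : ℝ) (hμ : 0 < μ)
    (hab : ∀ x ∈ Set.Icc (0 : ℝ) 1, μ ≤ a x)
    (haint : IntervalIntegrable a MeasureTheory.volume 0 1)
    (hb0 : b 0 = 0) (hbn : b (n + 1) = 1) (hmono : ∀ i ≤ n, b i < b (i + 1))
    (H : ℝ → ℝ) (hH : ∀ t, H t = if 0 < t then 1 else 0)
    (j : ℕ) (hj1 : 1 ≤ j) (hjn : j ≤ n) (hacont : ContinuousAt a (b j)) :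
    (∀ x ∈ Set.Ioo (b j) (b (j + 1)),
        (∑ i ∈ Finset.range (n + 1), c i * H (x - b i)) ^ 2 =
          (∑ i ∈ Finset.range (j + 1), c i) ^ 2) ∧
    HasDerivAt
      (fun t => ∫ x in (0 : ℝ)..1,
          a x * (∑ i ∈ Finset.range (n + 1), c i * H (x - Function.update b j t i)) ^ 2)
      (-2 * c j * a (b j) * (∑ i ∈ Finset.range j, c i + c j / 2)) (b j) :=
  stmt6_general n c b a haint hb0 hbn hmono H hH j hj1 hjn hacont
end

section
/- Let 0 = b₀ < b₁ < … < bₙ < b_{n+1} = 1 and a(x) ≥ μ > 0 integrable. Then the smallest eigenvalue of the stiffness matrix A with A_{ij} = ∫_{b_{max(i,j)−1}}^1 a(x)dx satisfies λ_min(A) ≥ μ·h_min/4, where h_min = minᵢ(bᵢ − b_{i−1}); in particular A is positive definite and invertible. -/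
/-!
With `c k = ∫ x in b k..b (k + 1), a x ≥ μ * hmin` and `L` the lower-triangular matrix of ones,
the stiffness matrix factors as `A = Lᵀ * diagonal c * L`, so
`ξ ⬝ᵥ A *ᵥ ξ = ∑ k, c k * (L *ᵥ ξ) k ^ 2`. The entries of `ξ` are differences of consecutive
partial sums `(L *ᵥ ξ) k`, whence
`ξ ⬝ᵥ ξ ≤ 4 * (L *ᵥ ξ) ⬝ᵥ (L *ᵥ ξ)` and `ξ ⬝ᵥ A *ᵥ ξ ≥ μ * hmin / 4 * (ξ ⬝ᵥ ξ)`.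
-/

open Finset Matrix MeasureTheory

theorem sum_sq_le_four_mul_sum_sq_partialSum_s15 (x : ℕ → ℝ) (N : ℕ) :
    ∑ k ∈ range N, x k ^ 2 ≤ 4 * ∑ k ∈ range N, (∑ i ∈ range (k + 1), x i) ^ 2 := by
  set S : ℕ → ℝ := fun k => ∑ i ∈ range k, x i
  have hdiff : ∀ k, x k = S (k + 1) - S k := fun k => by simp [S, sum_range_succ]
  have hshift : ∑ k ∈ range N, S k ^ 2 ≤ ∑ k ∈ range N, S (k + 1) ^ 2 := by
    cases N with
    | zero => simp
    | succ N =>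
      have hS0 : S 0 = 0 := sum_range_zero x
      rw [sum_range_succ', sum_range_succ, hS0]
      linarith [sq_nonneg (S (N + 1))]
  calc ∑ k ∈ range N, x k ^ 2
      ≤ ∑ k ∈ range N, (2 * S (k + 1) ^ 2 + 2 * S k ^ 2) :=
        sum_le_sum fun k _ => by rw [hdiff]; nlinarith [sq_nonneg (S (k + 1) + S k)]
    _ ≤ 4 * ∑ k ∈ range N, S (k + 1) ^ 2 := by
        rw [sum_add_distrib, ← mul_sum, ← mul_sum]; linarith

def lowerOnes (R : Type*) [Zero R] [One R] (N : ℕ) : Matrix (Fin N) (Fin N) R :=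
  Matrix.of fun k i => if i ≤ k then 1 else 0

theorem lowerOnes_transpose_mul_diagonal_mul_apply {R : Type*} [Semiring R] {N : ℕ}
    (d : ℕ → R) (i j : Fin N) :
    ((lowerOnes R N)ᵀ * diagonal (fun k : Fin N => d k) * lowerOnes R N) i j =
      ∑ k ∈ Ico (max i j : ℕ) N, d k := by
  have hIco : Ico (max i j : ℕ) N = (range N).filter fun k => (j : ℕ) ≤ k ∧ (i : ℕ) ≤ k := by
    ext k; simp only [mem_Ico, mem_filter, mem_range, max_le_iff]; tauto
  rw [Matrix.mul_apply]
  simp only [mul_diagonal, lowerOnes, transpose_apply, of_apply, ite_mul,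
    mul_ite, one_mul, zero_mul, mul_one, mul_zero, Fin.le_def, ← ite_and, hIco, sum_filter]
  exact Fin.sum_univ_eq_sum_range (fun k => if (j : ℕ) ≤ k ∧ (i : ℕ) ≤ k then d k else 0) N

theorem lowerOnes_mulVec_apply {R : Type*} [Semiring R] {N : ℕ} (x : ℕ → R) (k : Fin N) :
    (lowerOnes R N *ᵥ fun i => x i) k = ∑ i ∈ range (k + 1), x i := by
  have hrange : range (k + 1) = (range N).filter fun i => i ≤ (k : ℕ) := by
    ext i; simp only [mem_range, mem_filter]; omega
  simp only [mulVec, dotProduct, lowerOnes, of_apply, ite_mul, one_mul, zero_mul, Fin.le_def,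
    hrange, sum_filter]
  exact Fin.sum_univ_eq_sum_range (fun i => if i ≤ (k : ℕ) then x i else 0) N

theorem dotProduct_self_le_four_mul_lowerOnes_mulVec {N : ℕ} (ξ : Fin N → ℝ) :
    ξ ⬝ᵥ ξ ≤ 4 * (lowerOnes ℝ N *ᵥ ξ) ⬝ᵥ (lowerOnes ℝ N *ᵥ ξ) := by
  set x : ℕ → ℝ := fun i => if h : i < N then ξ ⟨i, h⟩ else 0
  have hξ : ξ = fun i : Fin N => x i := funext fun i => by simp [x]
  rw [hξ]
  simp only [dotProduct, lowerOnes_mulVec_apply, ← sq]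
  rw [Fin.sum_univ_eq_sum_range (fun i => x i ^ 2),
    Fin.sum_univ_eq_sum_range (fun k => (∑ i ∈ range (k + 1), x i) ^ 2)]
  exact sum_sq_le_four_mul_sum_sq_partialSum_s15 x N

theorem le_dotProduct_lowerOnes_transpose_mul_diagonal_mul_mulVec {N : ℕ} {m : ℝ} (hm : 0 ≤ m)
    {d : Fin N → ℝ} (hd : ∀ k, m ≤ d k) (ξ : Fin N → ℝ) :
    m / 4 * (ξ ⬝ᵥ ξ) ≤ ξ ⬝ᵥ ((lowerOnes ℝ N)ᵀ * diagonal d * lowerOnes ℝ N) *ᵥ ξ := by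
  set y := lowerOnes ℝ N *ᵥ ξ
  have hquad :
      ξ ⬝ᵥ ((lowerOnes ℝ N)ᵀ * diagonal d * lowerOnes ℝ N) *ᵥ ξ = ∑ k, d k * y k ^ 2 := by
    rw [← mulVec_mulVec, ← mulVec_mulVec, dotProduct_mulVec, vecMul_transpose]
    simp only [dotProduct, mulVec_diagonal]
    exact sum_congr rfl fun k _ => by ring
  calc m / 4 * (ξ ⬝ᵥ ξ) ≤ m / 4 * (4 * y ⬝ᵥ y) :=
        mul_le_mul_of_nonneg_left (dotProduct_self_le_four_mul_lowerOnes_mulVec ξ) (by positivity)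
    _ = m * (y ⬝ᵥ y) := by ring
    _ = ∑ k, m * y k ^ 2 := by simp only [dotProduct, mul_sum, sq]
    _ ≤ ∑ k, d k * y k ^ 2 := sum_le_sum fun k _ => by gcongr; exact hd k
    _ = _ := hquad.symm

theorem Matrix.le_of_hasEigenvalue_of_le_dotProduct_mulVec {ι : Type*} [Fintype ι]
    [DecidableEq ι] {A : Matrix ι ι ℝ} {m : ℝ} (hA : ∀ ξ, m * (ξ ⬝ᵥ ξ) ≤ ξ ⬝ᵥ A *ᵥ ξ) {lam : ℝ}
    (hlam : Module.End.HasEigenvalue (toLin' A) lam) : m ≤ lam := by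
  obtain ⟨v, hv⟩ := hlam.exists_hasEigenvector
  have hAv : A *ᵥ v = lam • v := by simpa [toLin'_apply] using hv.apply_eq_smul
  have hvv : 0 < v ⬝ᵥ v := by simpa using dotProduct_star_self_pos_iff.mpr hv.2
  have := hA v
  rw [hAv, dotProduct_smul, smul_eq_mul] at this
  exact le_of_mul_le_mul_right this hvv

theorem Matrix.posDef_of_le_dotProduct_mulVec {ι : Type*} [Fintype ι] {A : Matrix ι ι ℝ}
    (hsymm : A.IsSymm) {m : ℝ} (hm : 0 < m) (hA : ∀ ξ, m * (ξ ⬝ᵥ ξ) ≤ ξ ⬝ᵥ A *ᵥ ξ) :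
    A.PosDef := by
  refine posDef_iff_dotProduct_mulVec.mpr ⟨isHermitian_iff_isSymm.mpr hsymm, fun ξ hξ => ?_⟩
  have hξξ : 0 < ξ ⬝ᵥ ξ := by simpa using dotProduct_star_self_pos_iff.mpr hξ
  simpa using (mul_pos hm hξξ).trans_le (hA ξ)

theorem mul_sub_le_intervalIntegral {f : ℝ → ℝ} {c x y : ℝ} (hxy : x ≤ y)
    (hf : IntervalIntegrable f volume x y) (hc : ∀ t ∈ Set.Icc x y, c ≤ f t) :
    c * (y - x) ≤ ∫ t in x..y, f t := by
  simpa [mul_comm] using intervalIntegral.integral_mono_on hxy intervalIntegrable_const hf hc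

theorem MonotoneOn.Icc_subset_Icc_of_lt {α : Type*} [Preorder α] {b : ℕ → α} {k N : ℕ}
    (hb : MonotoneOn b (Set.Iic N)) (hk : k < N) :
    Set.Icc (b k) (b (k + 1)) ⊆ Set.Icc (b 0) (b N) :=
  Set.Icc_subset_Icc (hb (Nat.zero_le N) hk.le (Nat.zero_le k)) (hb hk (le_refl N) hk)

theorem IntervalIntegrable.of_monotoneOn {f : ℝ → ℝ} {b : ℕ → ℝ} {k N : ℕ}
    (hb : MonotoneOn b (Set.Iic N)) (hf : IntervalIntegrable f volume (b 0) (b N)) (hk : k < N) :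
    IntervalIntegrable f volume (b k) (b (k + 1)) := by
  refine hf.mono_set ?_
  rw [Set.uIcc_of_le (hb hk.le hk (Nat.le_succ k)),
    Set.uIcc_of_le (hb (Nat.zero_le N) (le_refl N) (Nat.zero_le N))]
  exact hb.Icc_subset_Icc_of_lt hk

theorem intervalIntegral_eq_sum_Ico_of_monotoneOn {f : ℝ → ℝ} {b : ℕ → ℝ} {m N : ℕ}
    (hb : MonotoneOn b (Set.Iic N)) (hf : IntervalIntegrable f volume (b 0) (b N)) (hm : m ≤ N) :
    ∫ t in b m..b N, f t = ∑ k ∈ Ico m N, ∫ t in b k..b (k + 1), f t :=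
  (intervalIntegral.sum_integral_adjacent_intervals_Ico hm fun k hk =>
    hf.of_monotoneOn (k := k) hb hk.2).symm

/-- Lower eigenvalue bound `λ_min(A) ≥ μ h_min / 4` for the stiffness matrix; in
particular `A` is positive definite and invertible. -/
theorem stmt15 (n : ℕ) (b : ℕ → ℝ) (a : ℝ → ℝ) (μ : ℝ) (hμ : 0 < μ)
    (ha : ∀ x ∈ Set.Icc (0 : ℝ) 1, μ ≤ a x)
    (haint : IntervalIntegrable a MeasureTheory.volume 0 1)
    (hb0 : b 0 = 0) (hbn : b (n + 1) = 1) (hmono : ∀ i ≤ n, b i < b (i + 1))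
    (A : Matrix (Fin (n + 1)) (Fin (n + 1)) ℝ)
    (hA : ∀ i j : Fin (n + 1), A i j = ∫ x in b (max i.val j.val)..1, a x)
    (hmin : ℝ) (hhmin : hmin = ⨅ i : Fin (n + 1), (b (i.val + 1) - b i.val)) :
    (∀ lam : ℝ, Module.End.HasEigenvalue (Matrix.toLin' A) lam → μ * hmin / 4 ≤ lam) ∧
    A.PosDef ∧ IsUnit A := by
  have hb : StrictMonoOn b (Set.Iic (n + 1)) :=
    strictMonoOn_Iic_of_lt_succ fun k hk => by simpa using hmono k (Nat.lt_succ_iff.mp hk)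
  rw [← hb0, ← hbn] at ha haint
  set c : ℕ → ℝ := fun k => ∫ x in b k..b (k + 1), a x
  have hstiff : A = (lowerOnes ℝ (n + 1))ᵀ * diagonal (fun k : Fin (n + 1) => c k) *
      lowerOnes ℝ (n + 1) := by
    ext i j
    rw [hA, lowerOnes_transpose_mul_diagonal_mul_apply, ← hbn,
      intervalIntegral_eq_sum_Ico_of_monotoneOn hb.monotoneOn haint (by omega)]
  have hmin_pos : 0 < hmin := by
    obtain ⟨i, hi⟩ := exists_eq_ciInf_of_finite (f := fun i : Fin (n + 1) => b (i + 1) - b i)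
    rw [hhmin, ← hi, sub_pos]
    exact hmono i (Nat.lt_succ_iff.mp i.2)
  have hc : ∀ k : Fin (n + 1), μ * hmin ≤ c k := fun k => by
    have hgap : hmin ≤ b (k + 1) - b k := hhmin ▸ ciInf_le (Set.finite_range _).bddBelow k
    calc μ * hmin ≤ μ * (b (k + 1) - b k) := by gcongr
      _ ≤ c k := mul_sub_le_intervalIntegral (hmono k (Nat.lt_succ_iff.mp k.2)).le
          (haint.of_monotoneOn hb.monotoneOn k.2)
          fun t ht => ha t (hb.monotoneOn.Icc_subset_Icc_of_lt k.2 ht)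
  have hquad : ∀ ξ, μ * hmin / 4 * (ξ ⬝ᵥ ξ) ≤ ξ ⬝ᵥ A *ᵥ ξ :=
    hstiff ▸ le_dotProduct_lowerOnes_transpose_mul_diagonal_mul_mulVec (by positivity) hc
  have hpos : A.PosDef := posDef_of_le_dotProduct_mulVec
    (IsSymm.ext fun i j => by rw [hA, hA, max_comm]) (by positivity) hquad
  exact ⟨fun _ hlam => le_of_hasEigenvalue_of_le_dotProduct_mulVec hquad hlam, hpos, hpos.isUnit⟩
end
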